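/- arXiv:1603.00064 — 4 statements merged into one kernel-verified Lean document; each statement's English description precedes it below -/
import Mathlib

section
/- Let Λ be a discrete additive subgroup of ℝ^q and let r be the dimension of the ℝ-linear span of Λ. Then there is an isomorphism of topological additive groups between the quotient ℝ^q / Λ and (ℝ/ℤ)^r × ℝ^{q−r}. -/
/-!
The real span `V` of `Λ` contains `Λ` as a full lattice, so a `ℤ`-basis of `Λ` is an `ℝ`-basis
of `V`. Completing it by a basis of a complement of `V` gives linear coordinates on `ℝ^q` in
which `Λ` becomes `ℤ^r × 0`, and `ℝ^r × ℝ^{q-r} → (ℝ/ℤ)^r × ℝ^{q-r}` is an open quotient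
homomorphism with exactly this kernel.
-/

open Module Submodule Topology

noncomputable def ContinuousAddEquiv.quotientOfIsQuotientMap {G H : Type*} [AddGroup G]
    [TopologicalSpace G] [AddGroup H] [TopologicalSpace H] (f : G →+ H) (hf : IsQuotientMap f)
    {N : AddSubgroup G} [N.Normal] (hN : f.ker = N) : G ⧸ N ≃ₜ+ H :=
  let e : G ⧸ N ≃+ H := (QuotientAddGroup.quotientAddEquivOfEq hN.symm).trans
    (QuotientAddGroup.quotientKerEquivOfSurjective f hf.surjective)
  { e with
    continuous_toFun := (QuotientAddGroup.isQuotientMap_mk N).continuous_iff.mpr hf.continuous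
    continuous_invFun := by
      change Continuous e.symm
      rw [hf.continuous_iff]
      convert (QuotientAddGroup.isQuotientMap_mk N).continuous using 1
      funext x
      exact e.symm_apply_eq.mpr rfl }

def torusCoverMap (ι κ : Type*) :
    (ι → ℝ) × (κ → ℝ) →+ (ι → AddCircle (1 : ℝ)) × (κ → ℝ) :=
  (AddMonoidHom.compLeft (QuotientAddGroup.mk' _) ι).prodMap (AddMonoidHom.id _)

theorem isOpenQuotientMap_torusCoverMap (ι κ : Type*) :
    IsOpenQuotientMap (torusCoverMap ι κ) :=
  (IsOpenQuotientMap.piMap fun _ ↦ QuotientAddGroup.isOpenQuotientMap_mk).prodMap .id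

theorem mem_ker_torusCoverMap {ι κ : Type*} (x : (ι → ℝ) × (κ → ℝ)) :
    x ∈ (torusCoverMap ι κ).ker ↔ (∀ i, x.1 i ∈ Set.range (Int.cast : ℤ → ℝ)) ∧ x.2 = 0 := by
  simp [torusCoverMap, AddMonoidHom.prodMap, Prod.ext_iff, funext_iff,
    AddSubgroup.mem_zmultiples_iff]

theorem AddSubgroup.exists_basis_span_real_mem_iff {E : Type*} [NormedAddCommGroup E]
    [NormedSpace ℝ E] [FiniteDimensional ℝ E] (Λ : AddSubgroup E) [DiscreteTopology Λ] :
    ∃ b : Basis (Fin (finrank ℝ (span ℝ (Λ : Set E)))) ℝ (span ℝ (Λ : Set E)),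
      ∀ v : span ℝ (Λ : Set E), (v : E) ∈ Λ ↔ ∀ i, b.repr v i ∈ Set.range (Int.cast : ℤ → ℝ) := by
  set V := span ℝ (Λ : Set E)
  let L : Submodule ℤ V := Λ.toIntSubmodule.comap (V.subtype.restrictScalars ℤ)
  have : DiscreteTopology L :=
    DiscreteTopology.preimage_of_continuous_injective (Λ : Set E) continuous_subtype_val
      Subtype.val_injective
  have : IsZLattice ℝ L := ⟨by
    refine map_injective_of_injective V.injective_subtype ?_
    rw [map_span, Submodule.map_top, Submodule.range_subtype]
    congr
    ext x
    exact ⟨fun ⟨v, hv, hvx⟩ ↦ hvx ▸ hv, fun hx ↦ ⟨⟨x, subset_span hx⟩, hx, rfl⟩⟩⟩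
  have : Module.Free ℤ L := ZLattice.module_free ℝ L
  have : Module.Finite ℤ L := ZLattice.module_finite ℝ L
  let bL : Basis (Fin (finrank ℝ V)) ℤ L := (Free.chooseBasis ℤ L).reindex
    (Fintype.equivFinOfCardEq (by rw [← finrank_eq_card_chooseBasisIndex, ZLattice.rank ℝ L]))
  refine ⟨bL.ofZLatticeBasis ℝ L, fun v ↦ ?_⟩
  change _ ↔ ∀ i, _ ∈ Set.range (algebraMap ℤ ℝ)
  rw [← Basis.mem_span_iff_repr_mem, Basis.ofZLatticeBasis_span]
  exact Iff.rfl

theorem Submodule.exists_linearEquiv_prod_extending_basis {K E ι : Type*} [Field K] [AddCommGroup E]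
    [Module K E] [FiniteDimensional K E] [Finite ι] {V : Submodule K E} (b : Basis ι K V) :
    ∃ Ψ : E ≃ₗ[K] (ι → K) × (Fin (finrank K E - finrank K V) → K),
      (∀ x, (Ψ x).2 = 0 ↔ x ∈ V) ∧ ∀ v : V, (Ψ v).1 = b.equivFun v := by
  obtain ⟨W, hVW⟩ := V.exists_isCompl
  have hW : finrank K W = finrank K E - finrank K V := by
    have := finrank_add_eq_of_isCompl hVW
    omega
  refine ⟨(prodEquivOfIsCompl V W hVW).symm ≪≫ₗ
    b.equivFun.prodCongr ((finBasis K W).reindex (finCongr hW)).equivFun, fun x ↦ ?_, fun v ↦ ?_⟩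
  · simp only [LinearEquiv.trans_apply, LinearEquiv.prodCongr_apply, LinearEquiv.map_eq_zero_iff,
      prodEquivOfIsCompl_symm_apply_snd_eq_zero]
  · simp only [LinearEquiv.trans_apply, prodEquivOfIsCompl_symm_apply_left,
      LinearEquiv.prodCongr_apply]

theorem AddSubgroup.exists_linearEquiv_mem_iff {E : Type*} [NormedAddCommGroup E]
    [NormedSpace ℝ E] [FiniteDimensional ℝ E] (Λ : AddSubgroup E) [DiscreteTopology Λ] :
    ∃ Ψ : E ≃ₗ[ℝ] (Fin (finrank ℝ (span ℝ (Λ : Set E))) → ℝ) ×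
        (Fin (finrank ℝ E - finrank ℝ (span ℝ (Λ : Set E))) → ℝ),
      ∀ x, x ∈ Λ ↔ (∀ i, (Ψ x).1 i ∈ Set.range (Int.cast : ℤ → ℝ)) ∧ (Ψ x).2 = 0 := by
  obtain ⟨b, hb⟩ := Λ.exists_basis_span_real_mem_iff
  obtain ⟨Ψ, hΨV, hΨb⟩ := exists_linearEquiv_prod_extending_basis b
  refine ⟨Ψ, fun x ↦ ⟨fun hx ↦ ?_, fun ⟨hint, hx⟩ ↦ ?_⟩⟩
  · have hxV : x ∈ span ℝ (Λ : Set E) := subset_span hx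
    have hcoord : (Ψ x).1 = b.repr ⟨x, hxV⟩ := hΨb ⟨x, hxV⟩
    exact ⟨hcoord ▸ (hb ⟨x, hxV⟩).mp hx, (hΨV x).mpr hxV⟩
  · have hxV := (hΨV x).mp hx
    have hcoord : (Ψ x).1 = b.repr ⟨x, hxV⟩ := hΨb ⟨x, hxV⟩
    exact (hb ⟨x, hxV⟩).mpr (hcoord ▸ hint)

/-- Let `Λ` be a discrete additive subgroup of `ℝ^q` and let `r` be
the dimension of the ℝ-linear span of `Λ`.  Then there is an isomorphism of
topological additive groups between `ℝ^q / Λ` and `(ℝ/ℤ)^r × ℝ^{q-r}` (an additive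
group isomorphism which is a homeomorphism). -/
theorem stmt2 (q : ℕ) (Λ : AddSubgroup (Fin q → ℝ)) (hΛ : DiscreteTopology Λ)
    (r : ℕ) (hr : r = Module.finrank ℝ (Submodule.span ℝ (Λ : Set (Fin q → ℝ)))) :
    ∃ e : ((Fin q → ℝ) ⧸ Λ) ≃+ ((Fin r → AddCircle (1 : ℝ)) × (Fin (q - r) → ℝ)),
      Continuous e ∧ Continuous e.symm := by
  have hcoords := Λ.exists_linearEquiv_mem_iff
  rw [finrank_fin_fun, ← hr] at hcoords
  obtain ⟨Ψ, hΨ⟩ := hcoords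
  let f := (torusCoverMap (Fin r) (Fin (q - r))).comp Ψ.toAddMonoidHom
  have hf : IsQuotientMap f := (isOpenQuotientMap_torusCoverMap _ _).isQuotientMap.comp
    Ψ.toContinuousLinearEquiv.toHomeomorph.isQuotientMap
  have hker : f.ker = Λ := by
    ext x
    rw [hΨ, AddMonoidHom.mem_ker, ← mem_ker_torusCoverMap]
    rfl
  let e := ContinuousAddEquiv.quotientOfIsQuotientMap f hf hker
  exact ⟨e.toAddEquiv, e.continuous, e.symm.continuous⟩
end

section
/- Let Γ be the subgroup of Aff(ℝ²) generated by γ₁(x, y) = (x + 1, y) and γ₂(x, y) = (x + y, y + 1). Then: (i) the action of Γ on ℝ² is free and properly discontinuous; (ii) the translational part of Γ is Γ^tr = ℤ·(1, 0), so Γ has translational rank 1; (iii) the linear part is Γ^lin = {[[1, m],[0, 1]] : m ∈ ℤ}, the group of upper-triangular unipotent integer matrices. -/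
/-!
Every element of `Γ` has the normal form `(x, y) ↦ (x + k y + c, y + k)` with `k c : ℤ`, and
conversely every such map equals `γ₂ ^ k * γ₁ ^ d` for a suitable `d`; so `Γ` is parametrised by
`(k, c) ∈ ℤ²`. Freeness, the translational part and the linear part are read off the normal form.
For proper discontinuity: if `γ` moves a point of norm `≤ R` to a point of norm `≤ R`, then
`|k| ≤ 2R` and `|c| ≤ 2R + 2R²`, which leaves finitely many `(k, c)`.
-/

def IsNormalForm (k c : ℤ) (γ : (ℝ × ℝ) ≃ᵃ[ℝ] (ℝ × ℝ)) : Prop :=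
  ∀ p : ℝ × ℝ, γ p = (p.1 + k * p.2 + c, p.2 + k)

namespace IsNormalForm

variable {k c k' c' : ℤ} {γ γ' : (ℝ × ℝ) ≃ᵃ[ℝ] (ℝ × ℝ)}

theorem one : IsNormalForm 0 0 (1 : (ℝ × ℝ) ≃ᵃ[ℝ] (ℝ × ℝ)) := by
  intro p
  simp

theorem mul (h : IsNormalForm k c γ) (h' : IsNormalForm k' c' γ') :
    IsNormalForm (k + k') (c + c' + k * k') (γ * γ') := by
  intro p
  rw [AffineEquiv.coe_mul, Function.comp_apply, h', h]
  push_cast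
  ext <;> simp only <;> ring

theorem inv (h : IsNormalForm k c γ) : IsNormalForm (-k) (k * k - c) γ⁻¹ := by
  intro p
  apply γ.injective
  rw [AffineEquiv.inv_def, AffineEquiv.apply_symm_apply, h]
  push_cast
  ext <;> simp only <;> ring

theorem zpow (h : IsNormalForm k c γ) (j : ℤ) : ∃ d : ℤ, IsNormalForm (j * k) d (γ ^ j) := by
  induction j using Int.induction_on with
  | zero => exact ⟨0, by simpa using one⟩
  | succ i ih =>
    obtain ⟨d, hd⟩ := ih
    refine ⟨d + c + i * k * k, ?_⟩
    rw [zpow_add_one]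
    convert hd.mul h using 2
    ring
  | pred i ih =>
    obtain ⟨d, hd⟩ := ih
    refine ⟨d + (k * k - c) + (-i) * k * (-k), ?_⟩
    rw [zpow_sub_one]
    convert hd.mul h.inv using 2
    ring

theorem zpow_of_translation (h : IsNormalForm 0 c γ) (j : ℤ) :
    IsNormalForm 0 (j * c) (γ ^ j) := by
  induction j using Int.induction_on with
  | zero => simpa using one
  | succ i ih =>
    rw [zpow_add_one]
    convert ih.mul h using 2 <;> ring
  | pred i ih =>
    rw [zpow_sub_one]
    convert ih.mul h.inv using 2 <;> ring

theorem eq (h : IsNormalForm k c γ) (h' : IsNormalForm k c γ') : γ = γ' :=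
  AffineEquiv.ext fun p ↦ by rw [h p, h' p]

theorem linear_apply (h : IsNormalForm k c γ) (v : ℝ × ℝ) :
    γ.linear v = (v.1 + k * v.2, v.2) := by
  have hv := γ.map_vadd 0 v
  rw [vadd_eq_add, vadd_eq_add, add_zero, h, h] at hv
  rw [eq_sub_of_add_eq hv.symm]
  ext <;> simp

theorem eq_one_of_apply_eq (h : IsNormalForm k c γ) {p : ℝ × ℝ} (hp : γ p = p) : γ = 1 := by
  rw [h p, Prod.ext_iff] at hp
  obtain ⟨hc, hk⟩ := hp
  have hk : k = 0 := by simpa using hk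
  subst hk
  have hc : c = 0 := by simpa using hc
  subst hc
  exact h.eq one

theorem abs_le_of_norm_le (h : IsNormalForm k c γ) {p : ℝ × ℝ} {R : ℝ} (hp : ‖p‖ ≤ R)
    (hγp : ‖γ p‖ ≤ R) : |(k : ℝ)| ≤ 2 * R + 2 * R * R ∧ |(c : ℝ)| ≤ 2 * R + 2 * R * R := by
  have hR : 0 ≤ R := (norm_nonneg p).trans hp
  rw [h p] at hγp
  have hx₁ := abs_le.mp ((norm_fst_le p).trans hp)
  have hx₂ := abs_le.mp ((norm_snd_le p).trans hp)
  have hy₁ := abs_le.mp ((norm_fst_le _).trans hγp)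
  have hy₂ := abs_le.mp ((norm_snd_le _).trans hγp)
  have hk : |(k : ℝ)| ≤ 2 * R := abs_le.mpr ⟨by linarith, by linarith⟩
  have hkp : |(k : ℝ) * p.2| ≤ 2 * R * R := by
    rw [abs_mul]
    exact mul_le_mul hk (abs_le.mpr hx₂) (abs_nonneg _) (by positivity)
  obtain ⟨hkp₁, hkp₂⟩ := abs_le.mp hkp
  exact ⟨by nlinarith, abs_le.mpr ⟨by linarith, by linarith⟩⟩

end IsNormalForm

def normalFormSubgroup : Subgroup ((ℝ × ℝ) ≃ᵃ[ℝ] (ℝ × ℝ)) where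
  carrier := {γ | ∃ k c : ℤ, IsNormalForm k c γ}
  one_mem' := ⟨0, 0, .one⟩
  mul_mem' := fun ⟨_, _, h⟩ ⟨_, _, h'⟩ ↦ ⟨_, _, h.mul h'⟩
  inv_mem' := fun ⟨_, _, h⟩ ↦ ⟨_, _, h.inv⟩

theorem closure_eq_normalFormSubgroup {g₁ g₂ : (ℝ × ℝ) ≃ᵃ[ℝ] (ℝ × ℝ)}
    (h₁ : IsNormalForm 0 1 g₁) (h₂ : IsNormalForm 1 0 g₂) :
    Subgroup.closure {g₁, g₂} = normalFormSubgroup := by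
  apply le_antisymm
  · rw [Subgroup.closure_le, Set.insert_subset_iff, Set.singleton_subset_iff]
    exact ⟨⟨0, 1, h₁⟩, ⟨1, 0, h₂⟩⟩
  · rintro γ ⟨k, c, h⟩
    obtain ⟨d, hd⟩ := h₂.zpow k
    have hγ : γ = g₂ ^ k * g₁ ^ (c - d) := by
      refine h.eq ?_
      convert hd.mul (h₁.zpow_of_translation (c - d)) using 2 <;> ring
    rw [hγ]
    exact mul_mem (zpow_mem (Subgroup.subset_closure (by simp)) k)
      (zpow_mem (Subgroup.subset_closure (by simp)) _)

theorem Int.finite_setOf_abs_le (M : ℝ) : {k : ℤ | |(k : ℝ)| ≤ M}.Finite := by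
  convert (isCompact_closedBall (0 : ℤ) M).finite_of_discrete using 1
  ext k
  simp [Int.norm_eq_abs]

theorem finite_setOf_mem_normalFormSubgroup_image_inter_nonempty {K L : Set (ℝ × ℝ)}
    (hK : IsCompact K) (hL : IsCompact L) :
    {γ | γ ∈ normalFormSubgroup ∧ (γ '' K ∩ L).Nonempty}.Finite := by
  obtain ⟨R, hR⟩ := (hK.union hL).isBounded.subset_closedBall 0
  have hB := Int.finite_setOf_abs_le (2 * R + 2 * R * R)
  refine ((hB.prod hB).biUnion fun kc _ ↦ Set.Subsingleton.finite
      (s := {γ | IsNormalForm kc.1 kc.2 γ}) fun γ h γ' h' ↦ h.eq h').subset ?_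
  rintro γ ⟨⟨k, c, h⟩, _, ⟨p, hp, rfl⟩, hγp⟩
  have hnorm : ∀ q ∈ K ∪ L, ‖q‖ ≤ R := fun q hq ↦ by simpa using hR hq
  obtain ⟨hk, hc⟩ := h.abs_le_of_norm_le (hnorm p (.inl hp)) (hnorm _ (.inr hγp))
  exact Set.mem_biUnion (x := (k, c)) ⟨hk, hc⟩ h

theorem constVAdd_mem_normalFormSubgroup_iff {v : ℝ × ℝ} :
    AffineEquiv.constVAdd ℝ (ℝ × ℝ) v ∈ normalFormSubgroup ↔ ∃ n : ℤ, v = ((n : ℝ), (0 : ℝ)) := by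
  constructor
  · rintro ⟨k, c, h⟩
    have h₀ := h 0
    have h₁ := h (0, 1)
    simp only [AffineEquiv.constVAdd_apply, vadd_eq_add, Prod.ext_iff, Prod.fst_add,
      Prod.snd_add, Prod.fst_zero, Prod.snd_zero] at h₀ h₁
    exact ⟨c, Prod.ext (by linarith) (by linarith)⟩
  · rintro ⟨n, rfl⟩
    exact ⟨0, n, fun p ↦ by ext <;> simp [add_comm]⟩

/-- Let `Γ ≤ Aff(ℝ²)` be the subgroup generated by
`γ₁(x, y) = (x + 1, y)` and `γ₂(x, y) = (x + y, y + 1)`.  Then: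
(i) the action of `Γ` on `ℝ²` is free and properly discontinuous;
(ii) the translational part of `Γ` is `Γ^tr = ℤ·(1, 0)` (so `Γ` has translational
rank 1);
(iii) the linear part is `Γ^lin = {[[1, m],[0, 1]] : m ∈ ℤ}`, the group of
upper-triangular unipotent integer matrices. -/
theorem stmt5 (g₁ g₂ : (ℝ × ℝ) ≃ᵃ[ℝ] (ℝ × ℝ))
    (h₁ : ∀ p : ℝ × ℝ, g₁ p = (p.1 + 1, p.2))
    (h₂ : ∀ p : ℝ × ℝ, g₂ p = (p.1 + p.2, p.2 + 1)) :
    -- (i) free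
    (∀ γ ∈ Subgroup.closure {g₁, g₂}, γ ≠ 1 → ∀ p : ℝ × ℝ, γ p ≠ p) ∧
    -- (i) properly discontinuous
    (∀ K L : Set (ℝ × ℝ), IsCompact K → IsCompact L →
      {γ : (ℝ × ℝ) ≃ᵃ[ℝ] (ℝ × ℝ) | γ ∈ Subgroup.closure {g₁, g₂} ∧
        (⇑γ '' K ∩ L).Nonempty}.Finite) ∧
    -- (ii) translational part
    ({v : ℝ × ℝ | AffineEquiv.constVAdd ℝ (ℝ × ℝ) v ∈ Subgroup.closure {g₁, g₂}} =
      {v : ℝ × ℝ | ∃ n : ℤ, v = ((n : ℝ), (0 : ℝ))}) ∧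
    -- (iii) linear part
    ({L : (ℝ × ℝ) ≃ₗ[ℝ] (ℝ × ℝ) | ∃ γ ∈ Subgroup.closure {g₁, g₂},
        AffineEquiv.linear γ = L} =
      {L : (ℝ × ℝ) ≃ₗ[ℝ] (ℝ × ℝ) | ∃ m : ℤ,
        ∀ p : ℝ × ℝ, L p = (p.1 + (m : ℝ) * p.2, p.2)}) := by
  have hg₁ : IsNormalForm 0 1 g₁ := fun p ↦ by simp [h₁]
  have hg₂ : IsNormalForm 1 0 g₂ := fun p ↦ by simp [h₂]
  rw [closure_eq_normalFormSubgroup hg₁ hg₂]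
  refine ⟨fun γ ⟨k, c, h⟩ hγ p hp ↦ hγ (h.eq_one_of_apply_eq hp),
    fun K L hK hL ↦ finite_setOf_mem_normalFormSubgroup_image_inter_nonempty hK hL,
    Set.ext fun v ↦ constVAdd_mem_normalFormSubgroup_iff, Set.ext fun L ↦ ⟨?_, ?_⟩⟩
  · rintro ⟨γ, ⟨k, c, h⟩, rfl⟩
    exact ⟨k, h.linear_apply⟩
  · rintro ⟨m, hm⟩
    obtain ⟨d, hd⟩ := hg₂.zpow m
    rw [mul_one] at hd
    exact ⟨g₂ ^ m, ⟨m, d, hd⟩, LinearEquiv.ext fun v ↦ by rw [hd.linear_apply, hm]⟩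
end

section
/- Let V be a finite-dimensional real vector space and let C ⊆ V be a closed additive subgroup. Then C = (C^∨)^∨, i.e. C = {v ∈ V : ξ(v) ∈ ℤ for every linear functional ξ ∈ V* with ξ(C) ⊆ ℤ}. -/
/-!
Let `U` be the lineality space of `C`, the largest subspace contained in `C`. Projecting along `U`
onto a complement `W` exhibits `C` as the preimage of the closed subgroup `D = C ∩ W`, and
integrality conditions pull back along linear maps. `D` contains no line, hence is discrete:
otherwise short vectors `x ∈ D`, normalised, accumulate at a unit vector `u`, and the multiples
`⌊t / ‖x‖⌋ • x ∈ D` converge to `t • u` for every `t`. A discrete subgroup is a lattice in its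
span, and a lattice is cut out by the coordinate functionals of a `ℤ`-basis, extended to the whole
space; a point outside the span is detected by a functional vanishing on `D`, rescaled to take the
value `1/2` there.
-/

open Filter Topology Submodule

lemma tendsto_floor_div_mul_self {α : Type*} {l : Filter α} {r : α → ℝ} (hr0 : ∀ a, 0 < r a)
    (hr : Tendsto r l (𝓝 0)) (t : ℝ) : Tendsto (fun a => (⌊t / r a⌋ : ℝ) * r a) l (𝓝 t) := by
  rw [tendsto_iff_norm_sub_tendsto_zero]
  refine squeeze_zero (fun _ => norm_nonneg _) (fun a => ?_) hr
  obtain ⟨h0, h1⟩ := Int.fract_div_mul_self_mem_Ico (r a) t (hr0 a)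
  have : t - ⌊t / r a⌋ * r a = Int.fract (t / r a) * r a := by
    rw [← Int.self_sub_floor, sub_mul, div_mul_cancel₀ _ (hr0 a).ne']
  rw [Real.norm_eq_abs, abs_sub_comm, this, abs_of_nonneg h0]
  exact h1.le

section Lineality

variable {V : Type*} [AddCommGroup V] [Module ℝ V]

def AddSubgroup.lineality (C : AddSubgroup V) : Submodule ℝ V where
  carrier := {x | ∀ t : ℝ, t • x ∈ C}
  add_mem' ha hb t := by simpa only [smul_add] using C.add_mem (ha t) (hb t)
  zero_mem' t := by simp
  smul_mem' c x hx t := mul_smul t c x ▸ hx (t * c)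

namespace AddSubgroup

variable {C D : AddSubgroup V}

lemma mem_lineality {x : V} : x ∈ C.lineality ↔ ∀ t : ℝ, t • x ∈ C := Iff.rfl

lemma mem_of_mem_lineality {x : V} (hx : x ∈ C.lineality) : x ∈ C := by
  simpa using hx 1

lemma lineality_inf : (C ⊓ D).lineality = C.lineality ⊓ D.lineality := by
  ext x
  simp only [mem_lineality, Submodule.mem_inf, AddSubgroup.mem_inf, forall_and]

lemma _root_.Submodule.lineality_toAddSubgroup (W : Submodule ℝ V) :
    W.toAddSubgroup.lineality = W := by
  ext x
  exact ⟨fun hx => by simpa using hx 1, fun hx t => W.smul_mem t hx⟩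

lemma projection_mem_iff {W : Submodule ℝ V} (h : IsCompl W C.lineality) (x : V) :
    W.projection C.lineality h x ∈ C ↔ x ∈ C := by
  rw [← C.add_mem_cancel_right (mem_of_mem_lineality (projection_apply_mem h.symm x)),
    projection_add_projection_eq_self]

end AddSubgroup

end Lineality

section Discreteness

variable {E : Type*} [NormedAddCommGroup E] [NormedSpace ℝ E]

lemma AddSubgroup.mem_lineality_of_tendsto {α : Type*} {l : Filter α} [l.NeBot]
    {S : AddSubgroup E} (hS : IsClosed (S : Set E)) {x : α → E} (hxS : ∀ a, x a ∈ S)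
    (hx0 : ∀ a, x a ≠ 0) (hx : Tendsto (fun a => ‖x a‖) l (𝓝 0)) {u : E}
    (hu : Tendsto (fun a => ‖x a‖⁻¹ • x a) l (𝓝 u)) : u ∈ S.lineality := by
  intro t
  have hnorm (a : α) : 0 < ‖x a‖ := norm_pos_iff.mpr (hx0 a)
  have hlim : Tendsto (fun a => ((⌊t / ‖x a‖⌋ : ℝ) * ‖x a‖) • (‖x a‖⁻¹ • x a)) l (𝓝 (t • u)) :=
    (tendsto_floor_div_mul_self hnorm hx t).smul hu
  refine hS.mem_of_tendsto hlim (Eventually.of_forall fun a => ?_)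
  rw [smul_smul, mul_assoc, mul_inv_cancel₀ (hnorm a).ne', mul_one, Int.cast_smul_eq_zsmul]
  exact S.zsmul_mem (hxS a) _

lemma AddSubgroup.discreteTopology_of_lineality_eq_bot [FiniteDimensional ℝ E]
    {S : AddSubgroup E} (hS : IsClosed (S : Set E)) (h : S.lineality = ⊥) : DiscreteTopology S := by
  rw [discreteTopology_iff_isOpen_singleton_zero, Metric.isOpen_singleton_iff]
  by_contra! hsmall
  choose x hx hx0 using fun n : ℕ => hsmall (1 / (n + 1)) Nat.one_div_pos_of_nat
  have hx0' (n : ℕ) : (x n : E) ≠ 0 := by simpa using hx0 n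
  have hunit (n : ℕ) : ‖(x n : E)‖⁻¹ • (x n : E) ∈ Metric.sphere (0 : E) 1 := by
    simp [norm_smul, hx0' n]
  obtain ⟨u, hu, φ, hφ, hconv⟩ := (isCompact_sphere (0 : E) 1).tendsto_subseq hunit
  have hx_lim : Tendsto (fun n => ‖(x (φ n) : E)‖) atTop (𝓝 0) := by
    refine squeeze_zero (fun _ => norm_nonneg _) (fun n => ?_)
      (tendsto_one_div_add_atTop_nhds_zero_nat.comp hφ.tendsto_atTop)
    simpa using (hx (φ n)).le
  have := AddSubgroup.mem_lineality_of_tendsto hS (fun n => (x (φ n)).2) (fun n => hx0' (φ n))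
    hx_lim hconv
  rw [h, Submodule.mem_bot] at this
  simp [this] at hu

end Discreteness

section Duality

variable {V W : Type*} [AddCommGroup V] [Module ℝ V] [AddCommGroup W] [Module ℝ W]

def integralDual (C : Set V) : Set (Module.Dual ℝ V) :=
  {ξ | ∀ c ∈ C, ∃ n : ℤ, ξ c = n}

def integralCodual (D : Set (Module.Dual ℝ V)) : Set V :=
  {v | ∀ ξ ∈ D, ∃ n : ℤ, ξ v = n}

lemma subset_integralCodual_integralDual (C : Set V) :
    C ⊆ integralCodual (integralDual C) :=
  fun _ hv _ hξ => hξ _ hv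

lemma integralCodual_integralDual_preimage_subset (f : V →ₗ[ℝ] W) (D : Set W) :
    integralCodual (integralDual (f ⁻¹' D)) ⊆ f ⁻¹' integralCodual (integralDual D) :=
  fun _ hv η hη => hv (η ∘ₗ f) fun c hc => hη (f c) hc

lemma preimage_integralCodual_integralDual_image_subset {f : V →ₗ[ℝ] W}
    (hf : Function.Injective f) (L : Set V) :
    f ⁻¹' integralCodual (integralDual (f '' L)) ⊆ integralCodual (integralDual L) := by
  obtain ⟨g, hg⟩ := f.exists_leftInverse_of_injective (LinearMap.ker_eq_bot.mpr hf)
  have hgf (x : V) : g (f x) = x := LinearMap.congr_fun hg x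
  intro v hv η hη
  simpa only [LinearMap.comp_apply, hgf] using
    hv (η ∘ₗ g) (by rintro _ ⟨c, hc, rfl⟩; simpa only [LinearMap.comp_apply, hgf] using hη c hc)

lemma integralCodual_integralDual_subset_span (C : Set V) :
    integralCodual (integralDual C) ⊆ span ℝ C := by
  intro v hv
  by_contra hvC
  obtain ⟨f, hfv, hfC⟩ := exists_dual_map_eq_bot_of_notMem hvC inferInstance
  have hf_zero (c : V) (hc : c ∈ C) : f c = 0 := by
    simpa [hfC] using mem_map_of_mem (f := f) (subset_span hc)
  obtain ⟨n, hn⟩ := hv ((2 * f v)⁻¹ • f) fun c hc => ⟨0, by simp [hf_zero c hc]⟩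
  have h2n : (2 * n : ℝ) = 1 := by
    rw [← hn, LinearMap.smul_apply, smul_eq_mul]
    field_simp
  have : 2 * n = 1 := by exact_mod_cast h2n
  omega

lemma Module.Basis.integralCodual_integralDual_span_int_subset {ι : Type*} (b : Basis ι ℝ V) :
    integralCodual (integralDual (span ℤ (Set.range b) : Set V)) ⊆ span ℤ (Set.range b) := by
  intro v hv
  rw [SetLike.mem_coe, b.mem_span_iff_repr_mem ℤ]
  intro i
  obtain ⟨n, hn⟩ := hv (b.coord i) fun c hc => by
    obtain ⟨n, hn⟩ := (b.mem_span_iff_repr_mem ℤ c).mp hc i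
    exact ⟨n, by simpa using hn.symm⟩
  exact ⟨n, by simpa using hn.symm⟩

end Duality

section Lattice

variable {E : Type*} [NormedAddCommGroup E] [NormedSpace ℝ E] [FiniteDimensional ℝ E]

lemma integralCodual_integralDual_subset_of_isZLattice (L : Submodule ℤ E) [DiscreteTopology L]
    [IsZLattice ℝ L] : integralCodual (integralDual (L : Set E)) ⊆ L := by
  set b := Module.Free.chooseBasis ℤ L
  rw [← b.ofZLatticeBasis_span ℝ L]
  exact (b.ofZLatticeBasis ℝ L).integralCodual_integralDual_span_int_subset

lemma AddSubgroup.integralCodual_integralDual_subset_of_discreteTopology (D : AddSubgroup E)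
    [DiscreteTopology D] : integralCodual (integralDual (D : Set E)) ⊆ D := by
  set F := span ℝ (D : Set E)
  set L : Submodule ℤ F := (AddSubgroup.toIntSubmodule D).comap (F.subtype.restrictScalars ℤ)
  have hL : F.subtype '' L = D := by
    ext x
    exact ⟨by rintro ⟨y, hy, rfl⟩; exact hy, fun hx => ⟨⟨x, subset_span hx⟩, hx, rfl⟩⟩
  have : DiscreteTopology L :=
    DiscreteTopology.preimage_of_continuous_injective (D : Set E)
      (LinearMap.continuous_of_finiteDimensional F.subtype) F.injective_subtype
  have : IsZLattice ℝ L := ⟨by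
    rw [← (map_injective_of_injective F.injective_subtype).eq_iff, map_span, Submodule.map_top,
      Submodule.range_subtype, hL]⟩
  intro v hv
  have hvF : v ∈ F := integralCodual_integralDual_subset_span _ hv
  change (⟨v, hvF⟩ : F) ∈ L
  exact integralCodual_integralDual_subset_of_isZLattice L
    (preimage_integralCodual_integralDual_image_subset F.injective_subtype (L : Set F)
      (by rwa [Set.mem_preimage, hL]))

end Lattice

/-- Let `V` be a finite-dimensional real vector space (with its
standard topology) and let `C ⊆ V` be a closed additive subgroup.  Then
`C = (C^∨)^∨`, i.e. `C` consists exactly of those `v ∈ V` such that `ξ(v) ∈ ℤ`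
for every linear functional `ξ ∈ V*` with `ξ(C) ⊆ ℤ`. -/
theorem stmt9 {V : Type*} [NormedAddCommGroup V] [NormedSpace ℝ V]
    [FiniteDimensional ℝ V] (C : AddSubgroup V) (hC : IsClosed (C : Set V)) :
    (C : Set V) =
      {v : V | ∀ ξ : Module.Dual ℝ V,
        (∀ c ∈ C, ∃ n : ℤ, ξ c = (n : ℝ)) → ∃ n : ℤ, ξ v = (n : ℝ)} := by
  refine (subset_integralCodual_integralDual _).antisymm ?_
  obtain ⟨W, hW⟩ := C.lineality.exists_isCompl
  set π := W.projection C.lineality hW.symm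
  set D : AddSubgroup V := C ⊓ W.toAddSubgroup
  have hCD : (C : Set V) = π ⁻¹' D := by
    ext x
    simp [D, π, C.projection_mem_iff hW.symm]
  have : DiscreteTopology D := by
    refine D.discreteTopology_of_lineality_eq_bot (hC.inter W.closed_of_finiteDimensional) ?_
    rw [AddSubgroup.lineality_inf, W.lineality_toAddSubgroup, hW.inf_eq_bot]
  change integralCodual (integralDual (C : Set V)) ⊆ C
  rw [hCD]
  exact (integralCodual_integralDual_preimage_subset π D).trans
    (Set.preimage_mono D.integralCodual_integralDual_subset_of_discreteTopology)
end

section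
/- Let V be a finite-dimensional real vector space and let C ⊆ V be a closed additive subgroup. Then in the dual space V*: the ℝ-linear span of C^∨ equals the annihilator of Cospan(C), and Cospan(C^∨) equals the annihilator of Span_ℝ(C). -/
/-!
Functionals in `C^∨` take integer values on every line `ℝ v ⊆ C`, so they vanish on `Cospan(C)`;
likewise every functional on a line `ℝ ξ ⊆ C^∨` vanishes on `C`. For the converse, split
`V = Cospan(C) ⊕ U`. Projecting onto `U` maps `C` into `C ∩ U`, which is closed with trivial
cospan and hence discrete: normalising a sequence of small nonzero elements would produce a
direction `v` with `ℝ v ⊆ C ∩ U`. A discrete subgroup is a lattice in its span, and the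
coordinate functionals of a `ℤ`-basis, extended to `V`, together with the functionals vanishing
on the lattice, span `V*`.
-/

open Filter Module Submodule Topology

lemma eq_zero_of_forall_mul_mem_int {a : ℝ} (h : ∀ t : ℝ, ∃ n : ℤ, t * a = n) : a = 0 := by
  by_contra ha
  obtain ⟨n, hn⟩ := h (2 * a)⁻¹
  have hhalf : ((2 * n : ℤ) : ℝ) = 1 := by
    push_cast
    rw [← hn]
    field_simp
  have : 2 * n = 1 := by exact_mod_cast hhalf
  omega

lemma tendsto_floor_div_mul {ι : Type*} {l : Filter ι} {a : ι → ℝ} (ha₀ : ∀ i, 0 < a i)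
    (ha : Tendsto a l (𝓝 0)) (t : ℝ) : Tendsto (fun i ↦ ⌊t / a i⌋ * a i) l (𝓝 t) := by
  have hlower : Tendsto (fun i ↦ t - a i) l (𝓝 t) := by simpa using tendsto_const_nhds.sub ha
  refine tendsto_of_tendsto_of_tendsto_of_le_of_le hlower tendsto_const_nhds (fun i ↦ ?_) fun i ↦ ?_
  · have := (Int.sub_one_lt_floor (t / a i)).le
    calc t - a i = (t / a i - 1) * a i := by field_simp [(ha₀ i).ne']
      _ ≤ ⌊t / a i⌋ * a i := by gcongr; exact (ha₀ i).le
  · calc ⌊t / a i⌋ * a i ≤ t / a i * a i := by gcongr; exacts [(ha₀ i).le, Int.floor_le _]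
      _ = t := div_mul_cancel₀ t (ha₀ i).ne'

namespace AddSubgroup

section Module

variable {V : Type*} [AddCommGroup V] [Module ℝ V] (C : AddSubgroup V)

def cospan : Submodule ℝ V where
  carrier := {v | ∀ t : ℝ, t • v ∈ C}
  add_mem' {v w} hv hw t := by simpa only [smul_add] using C.add_mem (hv t) (hw t)
  zero_mem' t := by simpa only [smul_zero] using C.zero_mem
  smul_mem' s v hv t := by simpa only [smul_smul] using hv (t * s)

def integralDual : Set (Dual ℝ V) := {ξ | ∀ c ∈ C, ∃ n : ℤ, ξ c = n}

variable {C}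

lemma coe_cospan_subset : (C.cospan : Set V) ⊆ C := fun v hv ↦ by simpa using hv 1

lemma apply_eq_zero_of_mem_integralDual_of_mem_cospan {ξ : Dual ℝ V} (hξ : ξ ∈ C.integralDual)
    {v : V} (hv : v ∈ C.cospan) : ξ v = 0 :=
  eq_zero_of_forall_mul_mem_int fun t ↦ by simpa using hξ _ (hv t)

lemma forall_smul_mem_integralDual_iff {ξ : Dual ℝ V} :
    (∀ t : ℝ, t • ξ ∈ C.integralDual) ↔ ∀ c ∈ C, ξ c = 0 := by
  refine ⟨fun h c hc ↦ eq_zero_of_forall_mul_mem_int fun t ↦ by simpa using h t c hc,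
    fun h t c hc ↦ ⟨0, by simp [h c hc]⟩⟩

end Module

section Normed

variable {V : Type*} [NormedAddCommGroup V] [NormedSpace ℝ V] {C : AddSubgroup V}

lemma smul_mem_of_tendsto_normalize {ι : Type*} {l : Filter ι} [l.NeBot]
    (hC : IsClosed (C : Set V)) {c : ι → V} (hcC : ∀ i, c i ∈ C) (hc₀ : ∀ i, c i ≠ 0)
    (hc : Tendsto c l (𝓝 0)) {v : V} (hv : Tendsto (fun i ↦ ‖c i‖⁻¹ • c i) l (𝓝 v)) (t : ℝ) :
    t • v ∈ C := by
  have hnorm := tendsto_floor_div_mul (fun i ↦ norm_pos_iff.2 (hc₀ i)) (by simpa using hc.norm) t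
  refine hC.mem_of_tendsto (hnorm.smul hv) (Eventually.of_forall fun i ↦ ?_)
  have : (⌊t / ‖c i‖⌋ * ‖c i‖) • ‖c i‖⁻¹ • c i = ⌊t / ‖c i‖⌋ • c i := by
    rw [smul_smul, mul_assoc, mul_inv_cancel₀ (norm_ne_zero_iff.2 (hc₀ i)), mul_one,
      Int.cast_smul_eq_zsmul]
  rw [SetLike.mem_coe, this]
  exact C.zsmul_mem (hcC i) _

variable [FiniteDimensional ℝ V]

theorem discreteTopology_of_cospan_eq_bot (hC : IsClosed (C : Set V)) (hcospan : C.cospan = ⊥) :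
    DiscreteTopology C := by
  rw [discreteTopology_iff_isOpen_singleton_zero, Metric.isOpen_singleton_iff]
  by_contra! hsmall
  have hseq (n : ℕ) : ∃ c ∈ C, c ≠ 0 ∧ ‖c‖ < 1 / (n + 1) := by
    obtain ⟨c, hc, hne⟩ := hsmall (1 / (n + 1)) (by positivity)
    exact ⟨c, c.2, fun h ↦ hne (Subtype.ext h), by simpa using hc⟩
  choose c hcC hc₀ hclt using hseq
  have hsphere (n : ℕ) : ‖c n‖⁻¹ • c n ∈ Metric.sphere (0 : V) 1 := by
    simp [norm_smul, hc₀ n]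
  obtain ⟨v, hv, φ, hφ, hlim⟩ := (isCompact_sphere (0 : V) 1).tendsto_subseq hsphere
  have hc : Tendsto c atTop (𝓝 0) :=
    squeeze_zero_norm (fun n ↦ (hclt n).le) tendsto_one_div_add_atTop_nhds_zero_nat
  have hv₀ : v ∈ C.cospan := smul_mem_of_tendsto_normalize hC (fun n ↦ hcC (φ n))
    (fun n ↦ hc₀ (φ n)) (hc.comp hφ.tendsto_atTop) hlim
  rw [hcospan, Submodule.mem_bot] at hv₀
  simp [hv₀] at hv

theorem span_integralDual_eq_top (D : AddSubgroup V) [DiscreteTopology D] :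
    span ℝ D.integralDual = ⊤ := by
  set E := span ℝ (D : Set V)
  let L : Submodule ℤ E := (toIntSubmodule D).comap (E.subtype.restrictScalars ℤ)
  have : DiscreteTopology L := DiscreteTopology.of_continuous_injective
    (f := fun x : L ↦ (⟨x.1.1, x.2⟩ : D)) (by fun_prop)
    fun x y h ↦ Subtype.ext (Subtype.ext congr($h.1))
  have : IsZLattice ℝ L := ⟨span_span_coe_preimage⟩
  let b := (Free.chooseBasis ℤ L).ofZLatticeBasis ℝ L
  choose ξ hξ using fun i ↦ LinearMap.exists_extend (b.coord i)
  have hξD (i) : ξ i ∈ D.integralDual := fun d hd ↦ by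
    have := (Free.chooseBasis ℤ L).ofZLatticeBasis_repr_apply ℝ L ⟨⟨d, subset_span hd⟩, hd⟩ i
    exact ⟨_, (congr($(hξ i) ⟨d, subset_span hd⟩)).trans this⟩
  refine eq_top_iff.2 fun φ _ ↦ ?_
  have hrest : φ - ∑ i, φ (b i) • ξ i ∈ D.integralDual := by
    suffices (φ - ∑ i, φ (b i) • ξ i) ∘ₗ E.subtype = 0 from
      fun d hd ↦ ⟨0, by simpa using congr($this ⟨d, subset_span hd⟩)⟩
    refine b.ext fun j ↦ ?_
    have hξb (i) : ξ i (b j) = if j = i then 1 else 0 := by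
      simpa [Finsupp.single_apply] using congr($(hξ i) (b j))
    simp [hξb]
  rw [← sub_add_cancel φ (∑ i, φ (b i) • ξ i)]
  exact add_mem (subset_span hrest) (sum_mem fun i _ ↦ smul_mem _ _ (subset_span (hξD i)))

theorem mem_span_integralDual (hC : IsClosed (C : Set V)) {ξ : Dual ℝ V}
    (hξ : ∀ v ∈ C.cospan, ξ v = 0) : ξ ∈ span ℝ C.integralDual := by
  obtain ⟨U, hU⟩ := C.cospan.exists_isCompl
  set π := U.projection C.cospan hU.symm
  set D := C ⊓ U.toAddSubgroup
  have hπ (c : V) (hc : c ∈ C) : π c ∈ D := by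
    refine mem_inf.2 ⟨?_, projection_apply_mem _ c⟩
    have := coe_cospan_subset (projection_apply_mem hU c)
    rw [projection_eq_self_sub_projection] at this
    simpa using C.sub_mem hc this
  have : DiscreteTopology D := by
    refine discreteTopology_of_cospan_eq_bot (hC.inter U.closed_of_finiteDimensional) ?_
    refine eq_bot_iff.2 fun v hv ↦
      (Submodule.mem_bot ℝ).2 (Submodule.disjoint_def.1 hU.disjoint v ?_ ?_)
    · exact fun t ↦ (mem_inf.1 (hv t)).1
    · simpa using (mem_inf.1 (hv 1)).2
  have hξπ : ξ = π.dualMap ξ := by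
    ext v
    rw [LinearMap.dualMap_apply, ← sub_eq_zero, ← map_sub, ← projection_eq_self_sub_projection]
    exact hξ _ (projection_apply_mem _ _)
  have hmap : span ℝ D.integralDual ≤ (span ℝ C.integralDual).comap π.dualMap :=
    span_le.2 fun η hη ↦ subset_span fun c hc ↦ hη _ (hπ c hc)
  rw [hξπ]
  exact hmap (by rw [span_integralDual_eq_top]; trivial)

end Normed

end AddSubgroup

/-- Let `V` be a finite-dimensional real vector space and let
`C ⊆ V` be a closed additive subgroup.  Then in the dual space `V*`:
the ℝ-linear span of `C^∨ = {ξ : ξ(C) ⊆ ℤ}` equals the annihilator of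
`Cospan(C) = {v : t·v ∈ C for all t}`, and `Cospan(C^∨)` equals the annihilator
of `Span_ℝ(C)`. -/
theorem stmt12 {V : Type*} [NormedAddCommGroup V] [NormedSpace ℝ V]
    [FiniteDimensional ℝ V] (C : AddSubgroup V) (hC : IsClosed (C : Set V)) :
    -- Span(C^∨) = annihilator of Cospan(C)
    ((Submodule.span ℝ
        {ξ : Module.Dual ℝ V | ∀ c ∈ C, ∃ n : ℤ, ξ c = (n : ℝ)} :
          Set (Module.Dual ℝ V)) =
      {ξ : Module.Dual ℝ V | ∀ v : V, (∀ t : ℝ, t • v ∈ C) → ξ v = 0}) ∧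
    -- Cospan(C^∨) = annihilator of Span(C)
    ({ξ : Module.Dual ℝ V | ∀ t : ℝ,
        (t • ξ) ∈ {ξ' : Module.Dual ℝ V | ∀ c ∈ C, ∃ n : ℤ, ξ' c = (n : ℝ)}} =
      {ξ : Module.Dual ℝ V | ∀ v ∈ Submodule.span ℝ (C : Set V), ξ v = 0}) := by
  refine ⟨Set.ext fun ξ ↦ ⟨fun hξ v hv ↦ ?_, C.mem_span_integralDual hC⟩, Set.ext fun ξ ↦ ?_⟩
  · have hann : span ℝ C.integralDual ≤ C.cospan.dualAnnihilator := span_le.2 fun η hη ↦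
      (mem_dualAnnihilator η).2 fun _ ↦ C.apply_eq_zero_of_mem_integralDual_of_mem_cospan hη
    exact (mem_dualAnnihilator ξ).1 (hann hξ) v hv
  · change (∀ t : ℝ, t • ξ ∈ C.integralDual) ↔ span ℝ C ≤ LinearMap.ker ξ
    rw [C.forall_smul_mem_integralDual_iff, span_le]
    rfl
end
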